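/- Parallel Normal Form Property: every normal term of the λG-calculus is in parallel form, i.e., (ignoring parenthesization) it can be written as t₁ ∥_{a₁} t₂ ∥_{a₂} … ∥_{aₙ} t_{n+1} where each tᵢ is a simply typed λ-term (contains no ∥ operator). -/
import Mathlib


/-- Formulas (= types) built from atoms, ⊥, ∧ and →. -/
inductive Form where
  | atom : ℕ → Form
  | bot  : Form
  | conj : Form → Form → Form
  | imp  : Form → Form → Form
deriving DecidableEq


/-- Terms of the λG-calculus: simply typed λ-terms extended with the parallel
operator u ∥ₐ v (the channel a is annotated with its communication kind B, C). -/
inductive Tm where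
  | var : ℕ → Tm
  | lam : ℕ → Form → Tm → Tm
  | app : Tm → Tm → Tm
  | pair : Tm → Tm → Tm
  | proj : Bool → Tm → Tm
  | efq : ℕ → Tm → Tm
  | par : ℕ → Form → Form → Tm → Tm → Tm
deriving DecidableEq

/-- Free variables of a λG-term; in u ∥ₐ v the channel a is bound. -/
def FV : Tm → Set ℕ
  | .var x => {x}
  | .lam x _ u => FV u \ {x}
  | .app u w => FV u ∪ FV w
  | .pair u v => FV u ∪ FV v
  | .proj _ u => FV u
  | .efq _ u => FV u
  | .par a _ _ u v => (FV u ∪ FV v) \ {a}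

/-- A term is a simply typed λ-term iff it contains no parallel operator. -/
def NoPar : Tm → Prop
  | .var _ => True
  | .lam _ _ u => NoPar u
  | .app u w => NoPar u ∧ NoPar w
  | .pair u v => NoPar u ∧ NoPar v
  | .proj _ u => NoPar u
  | .efq _ u => NoPar u
  | .par _ _ _ _ _ => False

def IsLam : Tm → Prop
  | .lam _ _ _ => True
  | _ => False

def IsPair : Tm → Prop
  | .pair _ _ => True
  | _ => False

def IsPar : Tm → Prop
  | .par _ _ _ _ _ => True
  | _ => False

/-- A λG-term is normal when no basic reduction applies to any subterm: no
β- or projection redex, no parallel operator immediately under another term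
former (permutation redexes, which are reducible modulo renaming of the
channel), and in u ∥ₐ v the channel a occurs free on both sides (otherwise a
cross reduction u ∥ₐ v ↦ u or u ∥ₐ v ↦ v applies). -/
def NormalTm : Tm → Prop
  | .var _ => True
  | .lam _ _ u => NormalTm u ∧ ¬ IsPar u
  | .app u w => NormalTm u ∧ NormalTm w ∧ ¬ IsLam u ∧ ¬ IsPar u ∧ ¬ IsPar w
  | .pair u v => NormalTm u ∧ NormalTm v ∧ ¬ IsPar u ∧ ¬ IsPar v
  | .proj _ u => NormalTm u ∧ ¬ IsPair u ∧ ¬ IsPar u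
  | .efq _ u => NormalTm u ∧ ¬ IsPar u
  | .par a _ _ u v => NormalTm u ∧ NormalTm v ∧ a ∈ FV u ∧ a ∈ FV v

/-- Parallel form: a tree of parallel operators applied to simply typed
λ-terms, i.e. (ignoring parenthesization) t₁ ∥ₐ₁ t₂ ∥ₐ₂ … ∥ₐₙ tₙ₊₁ where
each tᵢ contains no ∥. -/
inductive ParallelForm : Tm → Prop
  | base : NoPar t → ParallelForm t
  | par : ParallelForm u → ParallelForm v → ParallelForm (.par a B C u v)

lemma pf_nopar {t : Tm} (h : ParallelForm t) (hp : ¬ IsPar t) : NoPar t := by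
  cases h with
  | base h => exact h
  | par _ _ => exact absurd trivial hp

/-- Parallel Normal Form Property: every normal λG-term is in parallel form. -/
theorem parallel_normal_form (t : Tm) (h : NormalTm t) : ParallelForm t := by
  induction t with
  | var x => exact .base trivial
  | lam x A u ih =>
    exact .base (show NoPar u from pf_nopar (ih h.1) h.2)
  | app u w ihu ihw =>
    exact .base ⟨pf_nopar (ihu h.1) h.2.2.2.1, pf_nopar (ihw h.2.1) h.2.2.2.2⟩
  | pair u v ihu ihv =>
    exact .base ⟨pf_nopar (ihu h.1) h.2.2.1, pf_nopar (ihv h.2.1) h.2.2.2⟩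
  | proj b u ih =>
    exact .base (show NoPar u from pf_nopar (ih h.1) h.2.2)
  | efq n u ih =>
    exact .base (show NoPar u from pf_nopar (ih h.1) h.2)
  | par a B C u v ihu ihv =>
    exact .par (ihu h.1) (ihv h.2.1)
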